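/- arXiv:1005.2639 — 4 statements merged into one kernel-verified Lean document; each statement's English description precedes it below -/
import Mathlib

section
/- Let $d_1 > d_2 > \cdots > d_s > \tau_0$ be reals and $K_i = \prod_{j \neq i}(d_j - \tau_0)/(d_j - d_i)$. Then $|K_1| < |K_2|$. -/
/-!
Split off from $K_a$ the factor with $j = b$ and from $K_b$ the factor with $j = a$; the
remaining factors run over the same indices. These two split-off factors have the same
denominator $|d_a - d_b|$ and numerators $d_b - \tau_0 < d_a - \tau_0$. For every other
index $j$ the node $d_j$ lies below $d_b < d_a$, so $|d_j - d_b| < |d_j - d_a|$ and the factor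
of $K_a$ is smaller than that of $K_b$. Apply this with $a = 1$, $b = 2$.
-/

open Finset

/-- The value at `τ` of the Lagrange basis polynomial of the node `d i`. -/
noncomputable def lagrangeWeight {ι : Type*} [Fintype ι] [DecidableEq ι] (d : ι → ℝ) (τ : ℝ)
    (i : ι) : ℝ :=
  ∏ j ∈ univ.erase i, (d j - τ) / (d j - d i)

lemma abs_div_sub_le_abs_div_sub {x y a b : ℝ} (hxb : x < b) (hba : b < a) :
    |y / (x - a)| ≤ |y / (x - b)| := by
  rw [abs_div, abs_div, abs_of_neg (by linarith : x - a < 0), abs_of_neg (by linarith : x - b < 0)]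
  exact div_le_div_of_nonneg_left (abs_nonneg y) (by linarith) (by linarith)

lemma abs_lagrangeWeight_lt {ι : Type*} [Fintype ι] [DecidableEq ι] {d : ι → ℝ} {τ : ℝ}
    {a b : ι} (hba : d b < d a) (hτ : ∀ j, τ < d j)
    (hbelow : ∀ j, j ≠ a → j ≠ b → d j < d b) :
    |lagrangeWeight d τ a| < |lagrangeWeight d τ b| := by
  have hab : a ≠ b := fun h => hba.ne (congrArg d h.symm)
  set T := (univ.erase a).erase b with hT
  have hbelowT : ∀ j ∈ T, d j < d b := fun j hj => by
    simp only [T, mem_erase] at hj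
    exact hbelow j hj.2.1 hj.1
  have hKa : |lagrangeWeight d τ a|
      = |(d b - τ) / (d b - d a)| * ∏ j ∈ T, |(d j - τ) / (d j - d a)| := by
    rw [lagrangeWeight, abs_prod, ← mul_prod_erase _ _ (mem_erase.2 ⟨hab.symm, mem_univ b⟩)]
  have hKb : |lagrangeWeight d τ b|
      = |(d a - τ) / (d a - d b)| * ∏ j ∈ T, |(d j - τ) / (d j - d b)| := by
    rw [lagrangeWeight, abs_prod, hT, erase_right_comm,
      ← mul_prod_erase _ _ (mem_erase.2 ⟨hab, mem_univ a⟩)]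
  have hpair : |(d b - τ) / (d b - d a)| < |(d a - τ) / (d a - d b)| := by
    rw [abs_div, abs_div, abs_sub_comm (d b) (d a), abs_of_pos (sub_pos.2 (hτ a)),
      abs_of_pos (sub_pos.2 (hτ b)), abs_of_pos (sub_pos.2 hba)]
    exact div_lt_div_of_pos_right (by linarith) (sub_pos.2 hba)
  rw [hKa, hKb]
  refine mul_lt_mul hpair (prod_le_prod (fun _ _ => abs_nonneg _) fun j hj => ?_)
    (prod_pos fun j hj => ?_) (abs_nonneg _)
  · exact abs_div_sub_le_abs_div_sub (hbelowT j hj) hba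
  · exact abs_pos.2 (div_ne_zero (sub_pos.2 (hτ j)).ne'
      (sub_neg.2 ((hbelowT j hj).trans hba)).ne)

theorem stmt_3 (s : ℕ) (hs : 2 ≤ s) (d : Fin s → ℝ) (τ₀ : ℝ)
    (hanti : ∀ i j : Fin s, i < j → d j < d i)
    (hτ : ∀ i, τ₀ < d i)
    (K : Fin s → ℝ)
    (hK : ∀ i, K i = ∏ j ∈ Finset.univ.erase i, (d j - τ₀) / (d j - d i)) :
    |K ⟨0, by omega⟩| < |K ⟨1, by omega⟩| := by
  obtain rfl : K = lagrangeWeight d τ₀ := funext hK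
  refine abs_lagrangeWeight_lt (hanti _ _ (by simp [Fin.lt_def])) hτ fun j hj0 hj1 => hanti _ _ ?_
  simp only [ne_eq, Fin.ext_iff] at hj0 hj1
  rw [Fin.lt_def, Fin.val_mk]
  omega
end

section
/- For $n \geq 2s$, the set $X \subseteq \mathbb{F}_2^n$ consisting of all binary vectors whose Hamming weight $k$ satisfies $k \leq s$ and $k \equiv s \pmod 2$ is an $s$-distance set in the Hamming metric; in particular, the set of Hamming distances between distinct elements of $X$ has cardinality exactly $s$, and $|X| = \sum_{i=0}^{\lfloor s/2 \rfloor} \binom{n}{s - 2i}$. -/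
/-!
Distances within the set are even, since `d(x, y) ≡ |x| + |y| (mod 2)` and all weights have
the parity of `s`, and lie in `[2, 2s]` by the triangle inequality through `0`. Conversely,
`n ≥ 2s` leaves room for two weight-`s` words overlapping in `s - j` coordinates, at distance
`2j`, for every `1 ≤ j ≤ s`. The cardinality is a sum of Hamming sphere sizes `(n choose k)`.
-/

open Finset
open scoped symmDiff

namespace Finset

variable {ι : Type*} [DecidableEq ι]

theorem card_symmDiff_add_two_mul_card_inter (t u : Finset ι) :
    #(t ∆ u) + 2 * #(t ∩ u) = #t + #u := by
  rw [Finset.symmDiff_def, card_union_of_disjoint disjoint_sdiff_sdiff, card_sdiff, card_sdiff,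
    inter_comm u t]
  have := card_le_card (inter_subset_left (s₁ := t) (s₂ := u))
  have := card_le_card (inter_subset_right (s₁ := t) (s₂ := u))
  omega

theorem exists_card_eq_card_eq_card_symmDiff_eq [Fintype ι] {s j : ℕ} (hjs : j ≤ s)
    (hsj : s + j ≤ Fintype.card ι) :
    ∃ t u : Finset ι, #t = s ∧ #u = s ∧ #(t ∆ u) = 2 * j := by
  -- `t` and `B ∪ (C \ t)` meet exactly in `B`, which has `s - j` elements.
  obtain ⟨C, -, hC⟩ := exists_subset_card_eq (s := (univ : Finset ι)) (n := s + j)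
    (by rwa [card_univ])
  obtain ⟨t, htC, ht⟩ := exists_subset_card_eq (s := C) (n := s) (by omega)
  obtain ⟨B, hBt, hB⟩ := exists_subset_card_eq (s := t) (n := s - j) (by omega)
  have hCt : #(C \ t) = j := by rw [card_sdiff_of_subset htC]; omega
  have hdisj : Disjoint B (C \ t) := disjoint_sdiff.mono_left hBt
  have hinter : t ∩ (B ∪ C \ t) = B := by
    ext a; constructor
    · simp +contextual
    · intro ha; simp [ha, hBt ha]
  refine ⟨t, B ∪ C \ t, ht, ?_, ?_⟩
  · rw [card_union_of_disjoint hdisj]; omega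
  · have := card_symmDiff_add_two_mul_card_inter t (B ∪ C \ t)
    rw [hinter, card_union_of_disjoint hdisj] at this
    omega

end Finset

section Hamming

variable {ι β : Type*} [Fintype ι]

theorem hammingDist_le_hammingNorm_add_hammingNorm [DecidableEq β] [Zero β] (x y : ι → β) :
    hammingDist x y ≤ hammingNorm x + hammingNorm y := by
  simpa [hammingDist_zero_left] using hammingDist_triangle x 0 y

variable [DecidableEq ι] [DecidableEq β] [Zero β] [One β] [NeZero (1 : β)]

theorem hammingNorm_ite_mem (t : Finset ι) :
    hammingNorm (fun i => if i ∈ t then (1 : β) else 0) = #t := by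
  unfold hammingNorm
  congr 1
  ext i
  simp

theorem hammingDist_ite_mem (t u : Finset ι) :
    hammingDist (fun i => if i ∈ t then (1 : β) else 0) (fun i => if i ∈ u then 1 else 0)
      = #(t ∆ u) := by
  unfold hammingDist
  congr 1
  ext i
  by_cases hit : i ∈ t <;> by_cases hiu : i ∈ u <;> simp [mem_symmDiff, hit, hiu]

theorem exists_hammingNorm_eq_hammingNorm_eq_hammingDist_eq {s j : ℕ} (hjs : j ≤ s)
    (hsj : s + j ≤ Fintype.card ι) :
    ∃ x y : ι → β, hammingNorm x = s ∧ hammingNorm y = s ∧ hammingDist x y = 2 * j := by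
  obtain ⟨t, u, ht, hu, htu⟩ := exists_card_eq_card_eq_card_symmDiff_eq hjs hsj
  exact ⟨_, _, (hammingNorm_ite_mem t).trans ht, (hammingNorm_ite_mem u).trans hu,
    (hammingDist_ite_mem t u).trans htu⟩

end Hamming

section Binary

variable {ι : Type*} [Fintype ι]

theorem natCast_hammingNorm_zmod_two (x : ι → ZMod 2) :
    (hammingNorm x : ZMod 2) = ∑ i, x i := by
  rw [hammingNorm, natCast_card_filter]
  refine sum_congr rfl fun i _ => ?_
  generalize x i = a
  revert a
  decide

theorem hammingDist_mod_two (x y : ι → ZMod 2) :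
    hammingDist x y % 2 = (hammingNorm x + hammingNorm y) % 2 := by
  rw [← ZMod.natCast_eq_natCast_iff', Nat.cast_add, hammingDist_eq_hammingNorm,
    natCast_hammingNorm_zmod_two, natCast_hammingNorm_zmod_two, natCast_hammingNorm_zmod_two]
  simp only [Pi.add_apply, Pi.neg_apply, sum_add_distrib, CharTwo.neg_eq]

theorem card_hammingNorm_eq [DecidableEq ι] (k : ℕ) :
    #{x : ι → ZMod 2 | hammingNorm x = k} = (Fintype.card ι).choose k := by
  rw [← card_univ, ← card_powersetCard]
  refine card_nbij' (fun x => ({i | x i ≠ 0} : Finset ι)) (fun t i => if i ∈ t then 1 else 0)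
    ?_ ?_ ?_ ?_
  · intro x hx
    simpa [mem_powersetCard_univ, hammingNorm] using hx
  · intro t ht
    simpa [hammingNorm_ite_mem] using ht
  · intro x _
    funext i
    simp only [mem_filter, mem_univ, true_and]
    generalize x i = a
    revert a
    decide
  · intro t _
    ext i
    simp

end Binary

def parityBall (ι : Type*) [Fintype ι] [DecidableEq ι] (s : ℕ) : Finset (ι → ZMod 2) :=
  {x | hammingNorm x ≤ s ∧ hammingNorm x % 2 = s % 2}

section ParityBall

variable {ι : Type*} [Fintype ι] [DecidableEq ι]

theorem image_hammingDist_offDiag_parityBall {s : ℕ} (hn : 2 * s ≤ Fintype.card ι) :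
    (parityBall ι s).offDiag.image (fun p => hammingDist p.1 p.2) = (Icc 1 s).image (2 * ·) := by
  ext d
  simp only [parityBall, mem_image, mem_offDiag, mem_filter, mem_univ, true_and, mem_Icc,
    Prod.exists]
  constructor
  · rintro ⟨x, y, ⟨⟨hx, hx2⟩, ⟨hy, hy2⟩, hxy⟩, rfl⟩
    have hpos := hammingDist_pos.mpr hxy
    have hle := hammingDist_le_hammingNorm_add_hammingNorm x y
    have heven := hammingDist_mod_two x y
    exact ⟨hammingDist x y / 2, by omega, by omega⟩
  · rintro ⟨j, ⟨hj, hjs⟩, rfl⟩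
    obtain ⟨x, y, hx, hy, hxy⟩ :=
      exists_hammingNorm_eq_hammingNorm_eq_hammingDist_eq (ι := ι) (β := ZMod 2) hjs (by omega)
    refine ⟨x, y, ⟨⟨hx.le, by rw [hx]⟩, ⟨hy.le, by rw [hy]⟩, ?_⟩, hxy⟩
    rintro rfl
    rw [hammingDist_self] at hxy
    omega

theorem card_parityBall (s : ℕ) :
    #(parityBall ι s) = ∑ i ∈ range (s / 2 + 1), (Fintype.card ι).choose (s - 2 * i) := by
  rw [card_eq_sum_card_fiberwise (f := fun x => (s - hammingNorm x) / 2) (t := range (s / 2 + 1))]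
  · refine sum_congr rfl fun i hi => ?_
    rw [← card_hammingNorm_eq]
    congr 1
    ext x
    simp only [parityBall, mem_filter, mem_univ, true_and, mem_range] at hi ⊢
    omega
  · intro x hx
    simp only [parityBall, coe_filter, Set.mem_ofPred_eq, coe_range, Set.mem_Iio] at hx ⊢
    omega

end ParityBall

theorem stmt_6_general (n s : ℕ) (hn : 2 * s ≤ n)
    (X : Finset (Fin n → ZMod 2))
    (hX : X = Finset.univ.filter
      (fun x => hammingNorm x ≤ s ∧ hammingNorm x % 2 = s % 2)) :
    ((X.offDiag.image fun p => hammingDist p.1 p.2).card = s) ∧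
    X.card = ∑ i ∈ Finset.range (s / 2 + 1), n.choose (s - 2 * i) := by
  obtain rfl : X = parityBall (Fin n) s := hX
  constructor
  · rw [image_hammingDist_offDiag_parityBall (by simpa using hn),
      card_image_of_injective _ (mul_right_injective₀ two_ne_zero), Nat.card_Icc]
    omega
  · simpa using card_parityBall (ι := Fin n) s

theorem stmt_6 (n s : ℕ) (hs : 1 ≤ s) (hn : 2 * s ≤ n)
    (X : Finset (Fin n → ZMod 2))
    (hX : X = Finset.univ.filter
      (fun x => hammingNorm x ≤ s ∧ hammingNorm x % 2 = s % 2)) :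
    ((X.offDiag.image fun p => hammingDist p.1 p.2).card = s) ∧
    X.card = ∑ i ∈ Finset.range (s / 2 + 1), n.choose (s - 2 * i) :=
  stmt_6_general n s hn X hX
end

section
/- Let $2s \leq n+1$ and let $X \subseteq \mathbb{R}^{n+1}$ be the set of all 0-1 vectors of length $n+1$ with exactly $s$ entries equal to $1$. Then $X$ lies on a hyperplane orthogonal to the all-ones vector intersected with a sphere, and the set of Euclidean distances between distinct points of $X$ has cardinality exactly $s$; moreover $|X| = \binom{n+1}{s}$. Consequently there exists a spherical $s$-distance set in $S^{n-1}$ with $\binom{n+1}{s}$ points. -/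
/-!
The vector `1_A` of an `s`-subset `A` of `{0, …, n}` has norm `√s` and `⟪1, 1_A⟫ = s`, so `X` lies
on the intersection of a sphere with a hyperplane orthogonal to `1`: a sphere of positive radius
`√(s - s² / (n + 1))` inside an `n`-dimensional affine space. Moving its centre to the origin,
rescaling to radius one and choosing an orthonormal basis of the hyperplane maps `X` into `S^{n-1}`,
and this similarity preserves the number of distances. For `|A| = |B| = s` one has
`‖1_A - 1_B‖² = 2 |A \ B|`, and `|A \ B|` takes every value `1, …, s` because `2s ≤ n + 1`.
-/

open Finset Module

noncomputable def distSet {E : Type*} [PseudoMetricSpace E] [DecidableEq E] (X : Finset E) :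
    Finset ℝ :=
  X.offDiag.image fun p => dist p.1 p.2

section Similarity

variable {E F : Type*} [MetricSpace E] [MetricSpace F] {f : E → F} {X : Finset E} {c : ℝ}

lemma injOn_of_dist_eq_mul (hc : 0 < c)
    (hf : ∀ x ∈ X, ∀ y ∈ X, dist (f x) (f y) = c * dist x y) : Set.InjOn f X := by
  intro x hx y hy hxy
  have := hf x hx y hy
  rw [hxy, dist_self, zero_eq_mul] at this
  exact dist_eq_zero.mp (this.resolve_left hc.ne')

variable [DecidableEq E] [DecidableEq F]

lemma distSet_image_of_dist_eq_mul (hc : 0 < c)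
    (hf : ∀ x ∈ X, ∀ y ∈ X, dist (f x) (f y) = c * dist x y) :
    distSet (X.image f) = (distSet X).image (c * ·) := by
  have hinj := injOn_of_dist_eq_mul hc hf
  ext d
  simp only [distSet, mem_image, mem_offDiag, Prod.exists]
  constructor
  · rintro ⟨-, -, ⟨⟨x, hx, rfl⟩, ⟨y, hy, rfl⟩, hne⟩, rfl⟩
    exact ⟨_, ⟨x, y, ⟨hx, hy, fun h => hne (h ▸ rfl)⟩, rfl⟩, (hf x hx y hy).symm⟩
  · rintro ⟨-, ⟨x, y, ⟨hx, hy, hne⟩, rfl⟩, rfl⟩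
    exact ⟨f x, f y, ⟨⟨x, hx, rfl⟩, ⟨y, hy, rfl⟩, fun h => hne (hinj hx hy h)⟩, hf x hx y hy⟩

lemma card_distSet_image_of_dist_eq_mul (hc : 0 < c)
    (hf : ∀ x ∈ X, ∀ y ∈ X, dist (f x) (f y) = c * dist x y) :
    #(distSet (X.image f)) = #(distSet X) := by
  rw [distSet_image_of_dist_eq_mul hc hf,
    card_image_of_injective _ (mul_right_injective₀ hc.ne')]

end Similarity

section SphereInHyperplane

open scoped RealInnerProductSpace

variable {E : Type*} [NormedAddCommGroup E] [InnerProductSpace ℝ E]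

lemma exists_unit_sphere_dist_eq_mul_of_sub_mem (K : Submodule ℝ E) [FiniteDimensional ℝ K]
    {m : ℕ} (hK : finrank ℝ K = m) {c : E} {r : ℝ} (hr : 0 < r) {X : Finset E}
    (hX : ∀ x ∈ X, x - c ∈ K ∧ ‖x - c‖ = r) :
    ∃ f : E → EuclideanSpace ℝ (Fin m), (∀ x ∈ X, ‖f x‖ = 1) ∧
      ∀ x ∈ X, ∀ y ∈ X, dist (f x) (f y) = r⁻¹ * dist x y := by
  let φ : K ≃ₗᵢ[ℝ] EuclideanSpace ℝ (Fin m) :=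
    ((stdOrthonormalBasis ℝ K).reindex (finCongr hK)).repr
  have hproj : ∀ x ∈ X, (K.orthogonalProjectionOnto (x - c) : E) = x - c := fun x hx =>
    K.starProjection_eq_self_iff.mpr (hX x hx).1
  refine ⟨fun x => r⁻¹ • φ (K.orthogonalProjectionOnto (x - c)), fun x hx => ?_,
    fun x hx y hy => ?_⟩
  · rw [norm_smul, φ.norm_map, Submodule.coe_norm, hproj x hx, (hX x hx).2, Real.norm_eq_abs,
      abs_of_pos (inv_pos.mpr hr), inv_mul_cancel₀ hr.ne']
  · rw [dist_smul₀, φ.dist_map, Subtype.dist_eq, hproj x hx, hproj y hy, dist_sub_right,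
      Real.norm_eq_abs, abs_of_pos (inv_pos.mpr hr)]

variable {v x : E} {a : ℝ}

lemma sub_smul_mem_orthogonal_of_inner_eq (hv : v ≠ 0) (hx : ⟪v, x⟫ = a) :
    x - (a / ‖v‖ ^ 2) • v ∈ (ℝ ∙ v)ᗮ := by
  have : ‖v‖ ^ 2 ≠ 0 := by positivity
  rw [Submodule.mem_orthogonal_singleton_iff_inner_right, inner_sub_right, inner_smul_right,
    real_inner_self_eq_norm_sq, hx, div_mul_cancel₀ _ this, sub_self]

lemma norm_sub_smul_sq_of_inner_eq (hv : v ≠ 0) (hx : ⟪v, x⟫ = a) :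
    ‖x - (a / ‖v‖ ^ 2) • v‖ ^ 2 = ‖x‖ ^ 2 - a ^ 2 / ‖v‖ ^ 2 := by
  have : ‖v‖ ≠ 0 := norm_ne_zero_iff.mpr hv
  rw [norm_sub_sq_real, inner_smul_right, real_inner_comm, hx, norm_smul, Real.norm_eq_abs,
    mul_pow, sq_abs]
  field_simp
  ring

lemma exists_unit_sphere_similar_of_inner_eq_of_norm_eq [FiniteDimensional ℝ E] {m : ℕ}
    (hE : finrank ℝ E = m + 1) (hv : v ≠ 0) {R : ℝ} (hR : a ^ 2 / ‖v‖ ^ 2 < R ^ 2)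
    [DecidableEq E] {X : Finset E} (hX : ∀ x ∈ X, ⟪v, x⟫ = a ∧ ‖x‖ = R) :
    ∃ Y : Finset (EuclideanSpace ℝ (Fin m)),
      (∀ y ∈ Y, ‖y‖ = 1) ∧ #(distSet Y) = #(distSet X) ∧ #Y = #X := by
  have : Fact (finrank ℝ E = m + 1) := ⟨hE⟩
  have hr : 0 < √(R ^ 2 - a ^ 2 / ‖v‖ ^ 2) := Real.sqrt_pos.mpr (sub_pos.mpr hR)
  have hX_sphere : ∀ x ∈ X, x - (a / ‖v‖ ^ 2) • v ∈ (ℝ ∙ v)ᗮ ∧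
      ‖x - (a / ‖v‖ ^ 2) • v‖ = √(R ^ 2 - a ^ 2 / ‖v‖ ^ 2) := by
    intro x hx
    refine ⟨sub_smul_mem_orthogonal_of_inner_eq hv (hX x hx).1, ?_⟩
    rw [← (hX x hx).2, ← norm_sub_smul_sq_of_inner_eq hv (hX x hx).1,
      Real.sqrt_sq (norm_nonneg _)]
  have hK : finrank ℝ (ℝ ∙ v)ᗮ = m := Submodule.finrank_orthogonal_span_singleton hv
  obtain ⟨f, hf_norm, hf_dist⟩ := exists_unit_sphere_dist_eq_mul_of_sub_mem (ℝ ∙ v)ᗮ hK hr hX_sphere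
  have hc := inv_pos.mpr hr
  refine ⟨X.image f, ?_, card_distSet_image_of_dist_eq_mul hc hf_dist,
    card_image_of_injOn (injOn_of_dist_eq_mul hc hf_dist)⟩
  simpa only [mem_image, forall_exists_index, and_imp, forall_apply_eq_imp_iff₂] using hf_norm

end SphereInHyperplane

section IndicatorVectors

open scoped RealInnerProductSpace

variable {ι : Type*} [DecidableEq ι]

noncomputable def indicatorVec (A : Finset ι) : EuclideanSpace ℝ ι :=
  WithLp.toLp 2 fun i => if i ∈ A then 1 else 0

lemma indicatorVec_injective : Function.Injective (indicatorVec (ι := ι)) := by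
  intro A B h
  ext i
  have := congrFun (congrArg WithLp.ofLp h) i
  simp only [indicatorVec] at this
  split_ifs at this <;> simp_all

variable [Fintype ι]

lemma sum_indicatorVec (A : Finset ι) : ∑ i, indicatorVec A i = #A := by
  simp [indicatorVec]

lemma inner_indicatorVec (A B : Finset ι) : ⟪indicatorVec A, indicatorVec B⟫ = #(A ∩ B) := by
  simp [indicatorVec, PiLp.inner_apply]

lemma norm_indicatorVec (A : Finset ι) : ‖indicatorVec A‖ = √(#A : ℝ) := by
  rw [norm_eq_sqrt_real_inner, inner_indicatorVec, inter_self]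

lemma norm_indicatorVec_univ_sq : ‖indicatorVec (univ : Finset ι)‖ ^ 2 = Fintype.card ι := by
  rw [norm_indicatorVec, Real.sq_sqrt (Nat.cast_nonneg _), card_univ]

lemma dist_indicatorVec_of_card_eq {A B : Finset ι} (h : #A = #B) :
    dist (indicatorVec A) (indicatorVec B) = √(2 * (#(A \ B) : ℝ)) := by
  have hAB : (#(A \ B) : ℝ) = #A - #(A ∩ B) := by
    rw [← card_sdiff_add_card_inter A B]; push_cast; ring
  rw [dist_eq_norm, ← Real.sqrt_sq (norm_nonneg _), norm_sub_sq_real, norm_indicatorVec,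
    norm_indicatorVec, inner_indicatorVec, Real.sq_sqrt (by positivity),
    Real.sq_sqrt (by positivity), hAB, h]
  ring_nf

lemma exists_card_eq_card_sdiff_eq {s j : ℕ} (hj : j ≤ s) (h : s + j ≤ Fintype.card ι) :
    ∃ A B : Finset ι, #A = s ∧ #B = s ∧ #(A \ B) = j := by
  obtain ⟨T, -, hT⟩ := exists_subset_card_eq (s := (univ : Finset ι)) (by simpa using h)
  obtain ⟨B, hBT, hB⟩ := exists_subset_card_eq (s := T) (n := s) (by omega)
  obtain ⟨A, hTBA, hAT, hA⟩ := exists_subsuperset_card_eq (sdiff_subset (s := T) (t := B))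
    (by rw [card_sdiff_of_subset hBT]; omega) (by omega : s ≤ #T)
  have hAB : A \ B = T \ B := (sdiff_subset_sdiff hAT le_rfl).antisymm fun x hx =>
    mem_sdiff.mpr ⟨hTBA hx, (mem_sdiff.mp hx).2⟩
  refine ⟨A, B, hA, hB, ?_⟩
  rw [hAB, card_sdiff_of_subset hBT]
  omega

lemma distSet_image_indicatorVec_powersetCard {s : ℕ} (h : 2 * s ≤ Fintype.card ι) :
    distSet ((univ.powersetCard s).image (indicatorVec (ι := ι))) =
      (Icc 1 s).image fun j : ℕ => √(2 * j) := by
  ext d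
  simp only [distSet, mem_image, mem_offDiag, mem_powersetCard, subset_univ, true_and, Prod.exists,
    mem_Icc]
  constructor
  · rintro ⟨-, -, ⟨⟨A, hA, rfl⟩, ⟨B, hB, rfl⟩, hne⟩, rfl⟩
    have hAB : (A \ B).Nonempty := sdiff_nonempty.mpr fun hAB =>
      hne (congrArg _ (eq_of_subset_of_card_le hAB (hB.trans hA.symm).le))
    exact ⟨#(A \ B), ⟨card_pos.mpr hAB, (card_le_card sdiff_subset).trans hA.le⟩,
      (dist_indicatorVec_of_card_eq (hA.trans hB.symm)).symm⟩
  · rintro ⟨j, ⟨hj, hjs⟩, rfl⟩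
    obtain ⟨A, B, hA, hB, hAB⟩ := exists_card_eq_card_sdiff_eq (ι := ι) hjs (by omega)
    refine ⟨_, _, ⟨⟨A, hA, rfl⟩, ⟨B, hB, rfl⟩, fun h => ?_⟩, ?_⟩
    · rw [indicatorVec_injective h, sdiff_self, bot_eq_empty, card_empty] at hAB
      omega
    · rw [dist_indicatorVec_of_card_eq (hA.trans hB.symm), hAB]

lemma card_image_sqrt_two_mul_Icc (s : ℕ) : #((Icc 1 s).image fun j : ℕ => √(2 * j)) = s := by
  rw [card_image_of_injective, Nat.card_Icc, Nat.add_sub_cancel]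
  intro i j hij
  simpa using (Real.sqrt_inj (by positivity) (by positivity)).mp hij

lemma exists_unit_sphere_similar_image_indicatorVec_powersetCard {m s : ℕ}
    (hι : Fintype.card ι = m + 1) (hs : 0 < s) (hsm : s ≤ m) :
    ∃ Y : Finset (EuclideanSpace ℝ (Fin m)), (∀ y ∈ Y, ‖y‖ = 1) ∧
      #(distSet Y) = #(distSet ((univ.powersetCard s).image (indicatorVec (ι := ι)))) ∧
      #Y = #((univ.powersetCard s).image (indicatorVec (ι := ι))) := by
  have hone : ‖indicatorVec (univ : Finset ι)‖ ^ 2 = m + 1 := by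
    rw [norm_indicatorVec_univ_sq, hι, Nat.cast_succ]
  have hv : indicatorVec (univ : Finset ι) ≠ 0 := by
    rw [← norm_ne_zero_iff, ← pow_ne_zero_iff two_ne_zero, hone]
    positivity
  have hR : (s : ℝ) ^ 2 / ‖indicatorVec (univ : Finset ι)‖ ^ 2 < √s ^ 2 := by
    have : (s : ℝ) < m + 1 := by exact_mod_cast Nat.lt_succ_of_le hsm
    rw [hone, Real.sq_sqrt (Nat.cast_nonneg _), div_lt_iff₀ (by positivity), sq]
    exact mul_lt_mul_of_pos_left this (by exact_mod_cast hs)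
  refine exists_unit_sphere_similar_of_inner_eq_of_norm_eq (by rw [finrank_euclideanSpace, hι])
    hv hR ?_
  simp only [forall_mem_image, mem_powersetCard, subset_univ, true_and]
  intro A hA
  rw [inner_indicatorVec, univ_inter, norm_indicatorVec, hA]
  exact ⟨rfl, rfl⟩

end IndicatorVectors

open scoped Classical in
theorem stmt_8 (n s : ℕ) (hs : 1 ≤ s) (hn : 2 * s ≤ n + 1)
    (X : Finset (EuclideanSpace ℝ (Fin (n + 1))))
    (hX : X = (Finset.univ.powersetCard s).image
      (fun A : Finset (Fin (n + 1)) =>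
        (WithLp.toLp 2 (fun i => if i ∈ A then (1 : ℝ) else 0) : EuclideanSpace ℝ (Fin (n + 1))))) :
    (∀ x ∈ X, ∑ i, x i = (s : ℝ)) ∧
    (∀ x ∈ X, ‖x‖ = Real.sqrt s) ∧
    ((X.offDiag.image fun p => dist p.1 p.2).card = s) ∧
    X.card = (n + 1).choose s ∧
    ∃ Y : Finset (EuclideanSpace ℝ (Fin n)),
      (∀ y ∈ Y, ‖y‖ = 1) ∧
      ((Y.offDiag.image fun p => dist p.1 p.2).card = s) ∧
      Y.card = (n + 1).choose s := by
  replace hX : X = (univ.powersetCard s).image indicatorVec := hX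
  have hdist : #(distSet X) = s := by
    rw [hX, distSet_image_indicatorVec_powersetCard (by simpa using hn),
      card_image_sqrt_two_mul_Icc]
  have hcard : #X = (n + 1).choose s := by
    rw [hX, card_image_of_injective _ indicatorVec_injective, card_powersetCard, card_univ,
      Fintype.card_fin]
  obtain ⟨Y, hY, hYdist, hYcard⟩ := exists_unit_sphere_similar_image_indicatorVec_powersetCard
    (Fintype.card_fin (n + 1)) hs (by omega)
  rw [← hX] at hYdist hYcard
  refine ⟨?_, ?_, hdist, hcard, Y, hY, hYdist.trans hdist, hYcard.trans hcard⟩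
  all_goals
    simp only [hX, forall_mem_image, mem_powersetCard, subset_univ, true_and]
    intro A hA
  · rw [sum_indicatorVec, hA]
  · rw [norm_indicatorVec, hA]
end

section
/- The vertices of a regular $(2s+1)$-gon inscribed in the unit circle $S^1$ form an $s$-distance set of cardinality $2s+1$, i.e., the set of pairwise Euclidean distances between distinct vertices has exactly $s$ elements. -/
/-!
The chord between vertices `j` and `k` of the regular `n`-gon has length `2 sin (π |j - k| / n)`,
and the differences `m` and `n - m` give the same chord. For `n = 2s + 1` every distance is
therefore `2 sin (π m / n)` with `1 ≤ m ≤ s`, and these `s` values are distinct because `sin` is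
strictly increasing on `[0, π/2]`.
-/

open Real Finset

lemma norm_cos_sin (α : ℝ) : ‖!₂[cos α, sin α]‖ = 1 := by
  simp [EuclideanSpace.norm_eq, Fin.sum_univ_two]

lemma dist_cos_sin (α β : ℝ) :
    dist !₂[cos α, sin α] !₂[cos β, sin β] = 2 * |sin ((α - β) / 2)| := by
  have key : (cos α - cos β) ^ 2 + (sin α - sin β) ^ 2 = (2 * sin ((α - β) / 2)) ^ 2 := by
    rw [cos_sub_cos, sin_sub_sin]
    linear_combination (4 * sin ((α - β) / 2) ^ 2) * sin_sq_add_cos_sq ((α + β) / 2)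
  simp [EuclideanSpace.dist_eq, Fin.sum_univ_two, Real.dist_eq, sq_abs, key, Real.sqrt_sq_eq_abs,
    abs_mul]

noncomputable def polygonVertex (n k : ℕ) : EuclideanSpace ℝ (Fin 2) :=
  !₂[cos (2 * π * k / n), sin (2 * π * k / n)]

noncomputable def chord (n m : ℕ) : ℝ := 2 * sin (π * m / n)

section chord

variable {n m : ℕ}

lemma chord_nonneg (hmn : m ≤ n) : 0 ≤ chord n m := by
  have : (m : ℝ) / n ≤ 1 := div_le_one_of_le₀ (by exact_mod_cast hmn) n.cast_nonneg
  unfold chord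
  rw [mul_div_assoc]
  exact mul_nonneg zero_le_two
    (sin_nonneg_of_nonneg_of_le_pi (by positivity) (by nlinarith [pi_pos]))

lemma chord_pos (hm : 0 < m) (hmn : m < n) : 0 < chord n m := by
  have : (m : ℝ) / n < 1 := (div_lt_one (by exact_mod_cast hm.trans hmn)).2 (by exact_mod_cast hmn)
  unfold chord
  rw [mul_div_assoc]
  have hpos : (0 : ℝ) < m / n := div_pos (by exact_mod_cast hm) (by exact_mod_cast hm.trans hmn)
  exact mul_pos two_pos (sin_pos_of_pos_of_lt_pi (by positivity) (by nlinarith [pi_pos]))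

lemma chord_sub (hmn : m ≤ n) : chord n (n - m) = chord n m := by
  obtain rfl | hn := n.eq_zero_or_pos
  · rw [Nat.le_zero.1 hmn]
  have : π * ((n - m : ℕ) : ℝ) / n = π - π * m / n := by
    rw [Nat.cast_sub hmn]; field_simp
  rw [chord, this, sin_pi_sub, chord]

lemma strictMonoOn_chord : StrictMonoOn (chord n) {m | 2 * m ≤ n} := by
  intro a (ha : 2 * a ≤ n) b (hb : 2 * b ≤ n) hab
  have hn : (0 : ℝ) < n := by exact_mod_cast (show 0 < n by omega)
  have mem : ∀ c : ℕ, 2 * c ≤ n → π * c / n ∈ Set.Icc (-(π / 2)) (π / 2) := fun c hc => by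
    have : (c : ℝ) / n ≤ 1 / 2 := by
      have : (2 * c : ℝ) ≤ n := by exact_mod_cast hc
      rw [div_le_iff₀ hn]; linarith
    constructor <;> rw [mul_div_assoc] <;> nlinarith [pi_pos, div_nonneg c.cast_nonneg hn.le]
  refine mul_lt_mul_of_pos_left (strictMonoOn_sin (mem a ha) (mem b hb) ?_) two_pos
  exact div_lt_div_of_pos_right (mul_lt_mul_of_pos_left (by exact_mod_cast hab) pi_pos) hn

end chord

section polygonVertex

variable {n j k : ℕ}

lemma norm_polygonVertex (n k : ℕ) : ‖polygonVertex n k‖ = 1 := norm_cos_sin _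

lemma dist_polygonVertex (n j k : ℕ) :
    dist (polygonVertex n j) (polygonVertex n k) = 2 * |sin (π * ((j : ℝ) - k) / n)| := by
  rw [polygonVertex, polygonVertex, dist_cos_sin]
  congr 3
  ring

lemma dist_polygonVertex_eq_chord (hkj : k ≤ j) (hjn : j - k ≤ n) :
    dist (polygonVertex n j) (polygonVertex n k) = chord n (j - k) := by
  have h := chord_nonneg hjn
  rw [chord] at h
  rw [dist_polygonVertex, ← Nat.cast_sub hkj, chord, abs_of_nonneg (by linarith)]

lemma injOn_polygonVertex : Set.InjOn (polygonVertex n) (range n) := by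
  intro j hj k hk hjk
  simp only [coe_range, Set.mem_Iio] at hj hk
  by_contra hne
  wlog hkj : k < j generalizing j k
  · exact this hjk.symm hk hj (Ne.symm hne) (by omega)
  have := dist_polygonVertex_eq_chord (n := n) hkj.le (by omega)
  rw [hjk, dist_self] at this
  exact (chord_pos (by omega) (by omega : j - k < n)).ne this

lemma exists_chord_eq_dist_polygonVertex {s : ℕ} (hj : j < 2 * s + 1) (hk : k < 2 * s + 1)
    (hjk : j ≠ k) :
    ∃ m ∈ Icc 1 s, chord (2 * s + 1) m = dist (polygonVertex (2 * s + 1) j)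
      (polygonVertex (2 * s + 1) k) := by
  wlog hkj : k < j generalizing j k
  · obtain ⟨m, hm, h⟩ := this hk hj hjk.symm (by omega)
    exact ⟨m, hm, h.trans (dist_comm _ _)⟩
  rw [dist_polygonVertex_eq_chord hkj.le (by omega)]
  by_cases hs : j - k ≤ s
  · exact ⟨j - k, mem_Icc.2 ⟨by omega, hs⟩, rfl⟩
  · exact ⟨2 * s + 1 - (j - k), mem_Icc.2 ⟨by omega, by omega⟩, chord_sub (by omega)⟩

end polygonVertex

open scoped Classical in
lemma image_dist_offDiag_polygon (s : ℕ) :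
    (((range (2 * s + 1)).image (polygonVertex (2 * s + 1))).offDiag.image
      fun p => dist p.1 p.2) = (Icc 1 s).image (chord (2 * s + 1)) := by
  ext d
  simp only [mem_image, mem_offDiag, mem_range, Prod.exists]
  constructor
  · rintro ⟨_, _, ⟨⟨j, hj, rfl⟩, ⟨k, hk, rfl⟩, hne⟩, rfl⟩
    exact exists_chord_eq_dist_polygonVertex hj hk (fun h => hne (h ▸ rfl))
  · rintro ⟨m, hm, rfl⟩
    obtain ⟨hm1, hms⟩ := mem_Icc.1 hm
    refine ⟨_, _, ⟨⟨m, by omega, rfl⟩, ⟨0, by omega, rfl⟩, fun h => ?_⟩,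
      dist_polygonVertex_eq_chord (Nat.zero_le m) (by omega)⟩
    have := injOn_polygonVertex (mem_range.2 (by omega)) (mem_range.2 (by omega)) h
    omega

open scoped Classical in
theorem stmt_11_general (s : ℕ)
    (P : ℕ → EuclideanSpace ℝ (Fin 2))
    (hP : ∀ k, P k = ![Real.cos (2 * Real.pi * k / (2 * s + 1)),
                        Real.sin (2 * Real.pi * k / (2 * s + 1))])
    (V : Finset (EuclideanSpace ℝ (Fin 2)))
    (hV : V = (Finset.range (2 * s + 1)).image P) :
    (∀ v ∈ V, ‖v‖ = 1) ∧
    V.card = 2 * s + 1 ∧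
    ((V.offDiag.image fun p => dist p.1 p.2).card = s) := by
  have hP' : P = polygonVertex (2 * s + 1) :=
    funext fun k => WithLp.ofLp_injective 2 <| by simp [hP, polygonVertex]
  subst hV hP'
  refine ⟨?_, ?_, ?_⟩
  · simp [norm_polygonVertex]
  · rw [card_image_of_injOn injOn_polygonVertex, card_range]
  · rw [image_dist_offDiag_polygon, card_image_of_injOn, Nat.card_Icc, Nat.add_sub_cancel]
    exact strictMonoOn_chord.injOn.mono fun m hm => show 2 * m ≤ 2 * s + 1 by
      have := (mem_Icc.1 hm).2; omega

open scoped Classical in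
theorem stmt_11 (s : ℕ) (hs : 1 ≤ s)
    (P : ℕ → EuclideanSpace ℝ (Fin 2))
    (hP : ∀ k, P k = ![Real.cos (2 * Real.pi * k / (2 * s + 1)),
                        Real.sin (2 * Real.pi * k / (2 * s + 1))])
    (V : Finset (EuclideanSpace ℝ (Fin 2)))
    (hV : V = (Finset.range (2 * s + 1)).image P) :
    (∀ v ∈ V, ‖v‖ = 1) ∧
    V.card = 2 * s + 1 ∧
    ((V.offDiag.image fun p => dist p.1 p.2).card = s) :=
  stmt_11_general s P hP V hV
end
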